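/- Fix 0 < a < 1 and, for 0 < q < 1, let F(q) = ∑_{m=1}^∞ log(1 - a q^m). Then lim_{q→1⁻} (-log q)·F(q) = ∫₀¹ log(1-ax) d(log x) = -(L(a) - (1/2)·log a·log(1-a)), i.e. lim_{q→1⁻} log q · ∑_{m≥1} log(1-aq^m) = L(a) - (1/2) log a log(1-a). -/

import Mathlib

open Real Filter MeasureTheory intervalIntegral

/-- The Rogers dilogarithm `L(z) = -∫₀^z log(1-w)/w dw + (1/2) log z log(1-z)`. -/
noncomputable def rogersL (z : ℝ) : ℝ :=
  -(∫ w in (0:ℝ)..z, Real.log (1 - w) / w) + (1/2) * Real.log z * Real.log (1 - z)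

section aux

variable {a : ℝ}

lemma neg_log_one_sub_le (ha1 : a < 1) {x : ℝ} (hx0 : 0 ≤ x) (hxa : x ≤ a) :
    -Real.log (1 - x) ≤ x / (1 - a) := by
  have h1 : (0:ℝ) < 1 - x := by linarith
  have h2 : (0:ℝ) < 1 - a := by linarith
  have h := Real.log_le_sub_one_of_pos (inv_pos.2 h1)
  rw [Real.log_inv] at h
  have h3 : (1-x)⁻¹ - 1 = x / (1-x) := by field_simp; ring
  rw [h3] at h
  calc -Real.log (1-x) ≤ x / (1-x) := h
    _ ≤ x / (1-a) := by
        apply div_le_div_of_nonneg_left hx0 h2 (by linarith)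

lemma f_abs_le (ha1 : a < 1) {w : ℝ} (hw0 : 0 ≤ w) (hwa : w ≤ a) :
    |Real.log (1 - w) / w| ≤ 1 / (1 - a) := by
  have h2 : (0:ℝ) < 1 - a := by linarith
  rcases eq_or_lt_of_le hw0 with h | h
  · simp [← h]
    linarith
  · have hlog : Real.log (1 - w) ≤ 0 :=
      Real.log_nonpos (by linarith) (by linarith)
    rw [abs_div, abs_of_pos h, abs_of_nonpos hlog]
    have hb := neg_log_one_sub_le ha1 hw0 hwa
    have : -Real.log (1-w) / w ≤ (w / (1-a)) / w := by
      exact div_le_div_of_nonneg_right hb h.le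
    calc -Real.log (1-w) / w ≤ (w / (1-a)) / w := this
      _ = 1 / (1-a) := by field_simp

lemma f_intble (ha1 : a < 1) {c d : ℝ} (hc : 0 ≤ c) (hd : d ≤ a) (hcd : c ≤ d) :
    IntervalIntegrable (fun w => Real.log (1 - w) / w) volume c d := by
  rw [intervalIntegrable_iff, Set.uIoc_of_le hcd]
  apply MeasureTheory.Integrable.mono' (g := fun _ => 1/(1-a))
  · exact integrableOn_const measure_Ioc_lt_top.ne
  · exact ((Real.measurable_log.comp (measurable_const.sub measurable_id)).div
      measurable_id).aestronglyMeasurable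
  · filter_upwards [ae_restrict_mem measurableSet_Ioc] with w hw
    rw [Real.norm_eq_abs]
    exact f_abs_le ha1 (le_of_lt (lt_of_le_of_lt hc hw.1)) (hw.2.trans hd)

lemma term_bounds (ha : 0 < a) (ha1 : a < 1) {q : ℝ} (hq0 : 0 < q) (hq1 : q < 1) (m : ℕ) :
    Real.log q * Real.log (1 - a * q ^ (m + 1)) ≤
      -(∫ w in (a * q ^ (m + 1))..(a * q ^ m), Real.log (1 - w) / w) ∧
    -(∫ w in (a * q ^ (m + 1))..(a * q ^ m), Real.log (1 - w) / w) ≤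
      Real.log q * Real.log (1 - a * q ^ m) := by
  set c := a * q ^ (m + 1) with hc_def
  set d := a * q ^ m with hd_def
  have hc0 : 0 < c := mul_pos ha (pow_pos hq0 _)
  have hd0 : 0 < d := mul_pos ha (pow_pos hq0 _)
  have hcd : c ≤ d :=
    mul_le_mul_of_nonneg_left (pow_le_pow_of_le_one hq0.le hq1.le (Nat.le_succ m)) ha.le
  have hda : d ≤ a := mul_le_of_le_one_right ha.le (pow_le_one₀ hq0.le hq1.le)
  have hca : c ≤ a := hcd.trans hda
  have hceq : c = d * q := by rw [hc_def, hd_def, pow_succ]; ring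
  have hdc : d / c = q⁻¹ := by
    rw [hceq, div_mul_eq_div_div, div_self hd0.ne', one_div]
  have h0uIcc : (0:ℝ) ∉ Set.uIcc c d := by
    rw [Set.uIcc_of_le hcd]
    exact fun h => absurd h.1 (not_le.2 hc0)
  have hKint : ∀ K : ℝ, ∫ w in c..d, K * w⁻¹ = K * (-Real.log q) := by
    intro K
    rw [intervalIntegral.integral_const_mul, integral_inv h0uIcc, hdc, Real.log_inv]
  have hKcont : ∀ K : ℝ, IntervalIntegrable (fun w => K * w⁻¹) volume c d := by
    intro K
    apply ContinuousOn.intervalIntegrable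
    apply continuousOn_const.mul
    apply continuousOn_id.inv₀
    intro x hx
    rw [Set.uIcc_of_le hcd] at hx
    exact (lt_of_lt_of_le hc0 hx.1).ne'
  have hfint : IntervalIntegrable (fun w => Real.log (1 - w) / w) volume c d :=
    f_intble ha1 hc0.le hda hcd
  have h1 : ∫ w in c..d, Real.log (1 - d) * w⁻¹ ≤ ∫ w in c..d, Real.log (1 - w) / w := by
    apply intervalIntegral.integral_mono_on hcd (hKcont _) hfint
    intro x hx
    have hx0 : 0 < x := lt_of_lt_of_le hc0 hx.1
    rw [div_eq_mul_inv]
    apply mul_le_mul_of_nonneg_right _ (inv_nonneg.2 hx0.le)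
    exact Real.log_le_log (by linarith [hx.2]) (by linarith [hx.2])
  have h2 : ∫ w in c..d, Real.log (1 - w) / w ≤ ∫ w in c..d, Real.log (1 - c) * w⁻¹ := by
    apply intervalIntegral.integral_mono_on hcd hfint (hKcont _)
    intro x hx
    have hx0 : 0 < x := lt_of_lt_of_le hc0 hx.1
    rw [div_eq_mul_inv]
    apply mul_le_mul_of_nonneg_right _ (inv_nonneg.2 hx0.le)
    exact Real.log_le_log (by linarith [hx.2, hda]) (by linarith [hx.1])
  rw [hKint] at h1 h2
  constructor
  · have e : Real.log (1 - c) * (-Real.log q) = -(Real.log q * Real.log (1 - c)) := by ring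
    rw [e] at h2; linarith
  · have e : Real.log (1 - d) * (-Real.log q) = -(Real.log q * Real.log (1 - d)) := by ring
    rw [e] at h1; linarith

lemma term_nonneg (ha : 0 < a) (ha1 : a < 1) {q : ℝ} (hq0 : 0 < q) (hq1 : q < 1) (m : ℕ) :
    0 ≤ Real.log q * Real.log (1 - a * q ^ m) := by
  have h1 : a * q ^ m ≤ a := mul_le_of_le_one_right ha.le (pow_le_one₀ hq0.le hq1.le)
  have h2 : 0 ≤ a * q ^ m := by positivity
  have hl1 : Real.log q ≤ 0 := Real.log_nonpos hq0.le hq1.le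
  have hl2 : Real.log (1 - a * q ^ m) ≤ 0 := Real.log_nonpos (by linarith) (by linarith)
  nlinarith

lemma term_le_geom (ha : 0 < a) (ha1 : a < 1) {q : ℝ} (hq0 : 0 < q) (hq1 : q < 1) (m : ℕ) :
    Real.log q * Real.log (1 - a * q ^ m) ≤ ((-Real.log q) * a / (1 - a)) * q ^ m := by
  have h1 : a * q ^ m ≤ a := mul_le_of_le_one_right ha.le (pow_le_one₀ hq0.le hq1.le)
  have h2 : 0 ≤ a * q ^ m := by positivity
  have hb := neg_log_one_sub_le ha1 h2 h1
  have hl1 : 0 ≤ -Real.log q := neg_nonneg.2 (Real.log_nonpos hq0.le hq1.le)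
  have := mul_le_mul_of_nonneg_left hb hl1
  calc Real.log q * Real.log (1 - a * q ^ m)
      = (-Real.log q) * (-Real.log (1 - a * q ^ m)) := by ring
    _ ≤ (-Real.log q) * (a * q ^ m / (1 - a)) := this
    _ = ((-Real.log q) * a / (1 - a)) * q ^ m := by ring

lemma summable_S1 (ha : 0 < a) (ha1 : a < 1) {q : ℝ} (hq0 : 0 < q) (hq1 : q < 1) :
    Summable (fun m : ℕ => Real.log q * Real.log (1 - a * q ^ m)) := by
  apply Summable.of_nonneg_of_le (term_nonneg ha ha1 hq0 hq1) (term_le_geom ha ha1 hq0 hq1)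
  exact (summable_geometric_of_lt_one hq0.le hq1).mul_left _

lemma negI_sum (ha : 0 < a) (ha1 : a < 1) {q : ℝ} (hq0 : 0 < q) (hq1 : q < 1) :
    ∑' m : ℕ, -(∫ w in (a * q ^ (m + 1))..(a * q ^ m), Real.log (1 - w) / w)
      = -(∫ w in (0:ℝ)..a, Real.log (1 - w) / w) := by
  have hq_pow_le_a : ∀ k : ℕ, a * q ^ k ≤ a := fun k =>
    mul_le_of_le_one_right ha.le (pow_le_one₀ hq0.le hq1.le)
  have hq_pow_pos : ∀ k : ℕ, 0 < a * q ^ k := fun k => mul_pos ha (pow_pos hq0 _)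
  have hmono : ∀ k : ℕ, a * q ^ (k + 1) ≤ a * q ^ k := fun k =>
    mul_le_mul_of_nonneg_left (pow_le_pow_of_le_one hq0.le hq1.le (Nat.le_succ k)) ha.le
  have hint : ∀ k : ℕ, IntervalIntegrable (fun w => Real.log (1 - w) / w) volume
      (a * q ^ (k + 1)) (a * q ^ k) :=
    fun k => f_intble ha1 (hq_pow_pos _).le (hq_pow_le_a _) (hmono k)
  have h0a : IntervalIntegrable (fun w => Real.log (1 - w) / w) volume 0 a :=
    f_intble ha1 le_rfl le_rfl ha.le
  have h0k : ∀ k : ℕ, IntervalIntegrable (fun w => Real.log (1 - w) / w) volume 0 (a * q ^ k) :=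
    fun k => f_intble ha1 le_rfl (hq_pow_le_a k) (hq_pow_pos k).le
  have hpartial : ∀ N : ℕ,
      ∑ k ∈ Finset.range N, -(∫ w in (a * q ^ (k + 1))..(a * q ^ k), Real.log (1 - w) / w)
        = (∫ w in (0:ℝ)..(a * q ^ N), Real.log (1 - w) / w)
          - ∫ w in (0:ℝ)..a, Real.log (1 - w) / w := by
    intro N
    have h1 : ∑ k ∈ Finset.range N,
        ∫ w in (a * q ^ k)..(a * q ^ (k + 1)), Real.log (1 - w) / w
        = ∫ w in (a * q ^ 0)..(a * q ^ N), Real.log (1 - w) / w :=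
      intervalIntegral.sum_integral_adjacent_intervals (fun k _ => (hint k).symm)
    have h2 : ∀ k : ℕ, ∫ w in (a * q ^ k)..(a * q ^ (k + 1)), Real.log (1 - w) / w
        = -(∫ w in (a * q ^ (k + 1))..(a * q ^ k), Real.log (1 - w) / w) := fun k =>
      intervalIntegral.integral_symm _ _
    rw [Finset.sum_congr rfl (fun k _ => h2 k)] at h1
    have h3 : (∫ w in a..(0:ℝ), Real.log (1 - w) / w)
        + ∫ w in (0:ℝ)..(a * q ^ N), Real.log (1 - w) / w
        = ∫ w in a..(a * q ^ N), Real.log (1 - w) / w :=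
      intervalIntegral.integral_add_adjacent_intervals h0a.symm (h0k N)
    have h4 : (∫ w in a..(0:ℝ), Real.log (1 - w) / w)
        = -(∫ w in (0:ℝ)..a, Real.log (1 - w) / w) := intervalIntegral.integral_symm _ _
    rw [pow_zero, mul_one] at h1
    rw [h1, ← h3, h4]
    ring
  have ht1 : Tendsto (fun N : ℕ => ∫ w in (0:ℝ)..(a * q ^ N), Real.log (1 - w) / w)
      atTop (nhds 0) := by
    apply squeeze_zero_norm (a := fun N : ℕ => (1 / (1 - a) * a) * q ^ N)
    · intro N
      have hb : ∀ x ∈ Set.uIoc (0:ℝ) (a * q ^ N), ‖Real.log (1 - x) / x‖ ≤ 1 / (1 - a) := by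
        rw [Set.uIoc_of_le (hq_pow_pos N).le]
        intro x hx
        rw [Real.norm_eq_abs]
        exact f_abs_le ha1 hx.1.le (hx.2.trans (hq_pow_le_a N))
      have := intervalIntegral.norm_integral_le_of_norm_le_const hb
      rw [sub_zero, abs_of_nonneg (hq_pow_pos N).le] at this
      calc ‖∫ w in (0:ℝ)..(a * q ^ N), Real.log (1 - w) / w‖
          ≤ 1 / (1 - a) * (a * q ^ N) := this
        _ = (1 / (1 - a) * a) * q ^ N := by ring
    · have h := tendsto_pow_atTop_nhds_zero_of_lt_one hq0.le hq1
      simpa using h.const_mul (1 / (1 - a) * a)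
  have ht2 : Tendsto (fun N : ℕ =>
      ∑ k ∈ Finset.range N, -(∫ w in (a * q ^ (k + 1))..(a * q ^ k), Real.log (1 - w) / w))
      atTop (nhds (-(∫ w in (0:ℝ)..a, Real.log (1 - w) / w))) := by
    have h := ht1.sub_const (∫ w in (0:ℝ)..a, Real.log (1 - w) / w)
    rw [zero_sub] at h
    exact (Filter.tendsto_congr hpartial).2 h
  have hSI : Summable (fun m : ℕ =>
      -(∫ w in (a * q ^ (m + 1))..(a * q ^ m), Real.log (1 - w) / w)) := by
    apply Summable.of_nonneg_of_le
      (fun m => le_trans (term_nonneg ha ha1 hq0 hq1 (m + 1))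
        (term_bounds ha ha1 hq0 hq1 m).1)
      (fun m => (term_bounds ha ha1 hq0 hq1 m).2)
    exact summable_S1 ha ha1 hq0 hq1
  exact tendsto_nhds_unique hSI.hasSum.tendsto_sum_nat ht2

lemma key_ineq (ha : 0 < a) (ha1 : a < 1) {q : ℝ} (hq0 : 0 < q) (hq1 : q < 1) :
    -(∫ w in (0:ℝ)..a, Real.log (1 - w) / w) - Real.log q * Real.log (1 - a)
      ≤ Real.log q * ∑' m : ℕ, Real.log (1 - a * q ^ (m + 1)) ∧
    Real.log q * ∑' m : ℕ, Real.log (1 - a * q ^ (m + 1))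
      ≤ -(∫ w in (0:ℝ)..a, Real.log (1 - w) / w) := by
  have hS1 := summable_S1 ha ha1 hq0 hq1
  have hS2 : Summable (fun m : ℕ => Real.log q * Real.log (1 - a * q ^ (m + 1))) :=
    (summable_nat_add_iff 1).2 hS1
  have hSI : Summable (fun m : ℕ =>
      -(∫ w in (a * q ^ (m + 1))..(a * q ^ m), Real.log (1 - w) / w)) := by
    apply Summable.of_nonneg_of_le
      (fun m => le_trans (term_nonneg ha ha1 hq0 hq1 (m + 1))
        (term_bounds ha ha1 hq0 hq1 m).1)
      (fun m => (term_bounds ha ha1 hq0 hq1 m).2)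
    exact hS1
  have hsum_eq := negI_sum ha ha1 hq0 hq1
  have hP : Real.log q * ∑' m : ℕ, Real.log (1 - a * q ^ (m + 1))
      = ∑' m : ℕ, Real.log q * Real.log (1 - a * q ^ (m + 1)) := tsum_mul_left.symm
  constructor
  · have hle : (∑' m : ℕ, -(∫ w in (a * q ^ (m + 1))..(a * q ^ m), Real.log (1 - w) / w))
        ≤ ∑' m : ℕ, Real.log q * Real.log (1 - a * q ^ m) :=
      Summable.tsum_le_tsum (fun m => (term_bounds ha ha1 hq0 hq1 m).2) hSI hS1
    have hzero := Summable.tsum_eq_zero_add hS1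
    rw [pow_zero, mul_one] at hzero
    rw [hsum_eq, hzero] at hle
    rw [hP]
    linarith
  · have hle : (∑' m : ℕ, Real.log q * Real.log (1 - a * q ^ (m + 1)))
        ≤ ∑' m : ℕ, -(∫ w in (a * q ^ (m + 1))..(a * q ^ m), Real.log (1 - w) / w) :=
      Summable.tsum_le_tsum (fun m => (term_bounds ha ha1 hq0 hq1 m).1) hS2 hSI
    rw [hsum_eq] at hle
    rw [hP]
    linarith

end aux

theorem qdifference_asymptotics (a : ℝ) (ha : 0 < a) (ha1 : a < 1) :
    Tendsto (fun q : ℝ => Real.log q * ∑' m : ℕ, Real.log (1 - a * q ^ (m + 1)))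
      (nhdsWithin 1 (Set.Ioo 0 1))
      (nhds (rogersL a - (1/2) * Real.log a * Real.log (1 - a))) := by
  have htarget : rogersL a - (1/2) * Real.log a * Real.log (1 - a)
      = -(∫ w in (0:ℝ)..a, Real.log (1 - w) / w) := by
    unfold rogersL; ring
  rw [htarget]
  apply tendsto_of_tendsto_of_tendsto_of_le_of_le'
    (g := fun q : ℝ => -(∫ w in (0:ℝ)..a, Real.log (1 - w) / w)
      - Real.log q * Real.log (1 - a))
    (h := fun _ : ℝ => -(∫ w in (0:ℝ)..a, Real.log (1 - w) / w))
  · have hlog : Tendsto (fun q : ℝ => Real.log q) (nhdsWithin 1 (Set.Ioo 0 1)) (nhds 0) := by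
      have h := (Real.continuousAt_log one_ne_zero).tendsto
      rw [Real.log_one] at h
      exact h.mono_left nhdsWithin_le_nhds
    have h := (tendsto_const_nhds
      (x := -(∫ w in (0:ℝ)..a, Real.log (1 - w) / w))
      (f := nhdsWithin (1:ℝ) (Set.Ioo 0 1))).sub (hlog.mul_const (Real.log (1 - a)))
    simpa using h
  · exact tendsto_const_nhds
  · filter_upwards [self_mem_nhdsWithin] with q hq
    exact (key_ineq ha ha1 hq.1 hq.2).1
  · filter_upwards [self_mem_nhdsWithin] with q hq
    exact (key_ineq ha ha1 hq.1 hq.2).2
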